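/- arXiv:1803.11034 — 2 statements merged into one kernel-verified Lean document; each statement's English description precedes it below -/
import Mathlib

section
/- Let Σ_1, …, Σ_n be subsets of an alphabet Σ with Σ = ⋃_{i=1}^n Σ_i, let L_i ⊆ Σ_i* for each i ∈ [1, n], and let Σ_0 ⊆ Σ satisfy ⋃_{i ≠ j} (Σ_i ∩ Σ_j) ⊆ Σ_0. Then P_{Σ_0}(∥_{i=1}^n L_i) = ∥_{i=1}^n P_{Σ_0}(L_i), where on the right-hand side P_{Σ_0}(L_i) is viewed as a language over Σ_0 ∩ Σ_i and the synchronous product is ⋂_{i=1}^n P'_i⁻¹(P_{Σ_0}(L_i)) ⊆ Σ_0*, with P'_i : Σ_0* → (Σ_0 ∩ Σ_i)* the natural projection. -/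
/-- A *distribution* of the (finite) alphabet `α`: a family of non-empty,
pairwise incomparable (under set inclusion) sub-alphabets whose union is `α`.
Its size is `comps.ncard`. -/
structure Distr (α : Type) [Fintype α] where
  comps : Set (Set α)
  comps_nonempty : ∀ S ∈ comps, S.Nonempty
  comps_cover : ∀ a : α, ∃ S ∈ comps, a ∈ S
  comps_incomp : ∀ S ∈ comps, ∀ T ∈ comps, S ≠ T → ¬ S ⊆ T

section Defs

variable {α : Type} [Fintype α]

/-- Natural projection `P_{Σ'}`: erase from a string all symbols not in `S`. -/
noncomputable def projA (S : Set α) (s : List α) : List α :=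
  s.filter fun a => @decide (a ∈ S) (Classical.propDecidable _)

/-- `L` is decomposable with respect to `Δ`:
`L = ∥_i P_{Σ_i}(L) = ⋂_i P_{Σ_i}⁻¹(P_{Σ_i}(L))`. -/
def Decomposable (L : Set (List α)) (Δ : Distr α) : Prop :=
  L = ⋂ S ∈ Δ.comps, projA S ⁻¹' (projA S '' L)

/-- The partial order `≤_Σ` on distributions: every component of `Δ` is
contained in some component of `Δ'`. -/
def DistLE (Δ Δ' : Distr α) : Prop :=
  ∀ S ∈ Δ.comps, ∃ T ∈ Δ'.comps, S ⊆ T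

/-- `P` is a *reduction* of `Δ`. -/
def IsReduction (P : Set (Distr α)) (Δ : Distr α) : Prop :=
  2 ≤ P.ncard ∧
  (∀ Δ' ∈ P, Δ'.comps.ncard < Δ.comps.ncard) ∧
  (∀ L : Set (List α), Decomposable L Δ ↔ ∀ Δ' ∈ P, Decomposable L Δ')

/-- The maximal members (under set inclusion) of a family of sets. -/
def MaximalMem {β : Type} (F : Set (Set β)) : Set (Set β) :=
  {S | S ∈ F ∧ ∀ T ∈ F, S ⊆ T → S = T}

/-- The dependence relation `D_Δ`. -/
def DepRel (Δ : Distr α) : Set (α × α) :=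
  {p | ∃ S ∈ Δ.comps, p.1 ∈ S ∧ p.2 ∈ S}

/-- The independence relation `I_Δ = Σ × Σ − D_Δ`. -/
def IndepRel (Δ : Distr α) : Set (α × α) :=
  {p | ¬ ∃ S ∈ Δ.comps, p.1 ∈ S ∧ p.2 ∈ S}

/-- `Σ' ⊑ Δ`: `Σ'` is contained in some component of `Δ`. -/
def SqSub (S : Set α) (Δ : Distr α) : Prop :=
  ∃ T ∈ Δ.comps, S ⊆ T

/-- `Δ` is the greatest lower bound of the family `D` with respect to `≤_Σ`. -/
def IsGLBFam {l : ℕ} (D : Fin l → Distr α) (Δ : Distr α) : Prop :=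
  (∀ i, DistLE Δ (D i)) ∧
  ∀ Δ''' : Distr α, (∀ i, DistLE Δ''' (D i)) → DistLE Δ''' Δ

/-- `Δ'` is *merged* from `Δ`: `Δ' ≠ (Σ)` and `Δ'` is obtained from a
partition of the components of `Δ` having at least one block of size ≥ 2 by
taking the unions over the blocks and keeping only the maximal resulting
sub-alphabets. -/
def MergedFrom (Δ' Δ : Distr α) : Prop :=
  Δ'.comps ≠ {Set.univ} ∧
  ∃ part : Set (Set (Set α)),
    (∀ B ∈ part, B.Nonempty) ∧
    (∀ B ∈ part, B ⊆ Δ.comps) ∧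
    (∀ B ∈ part, ∀ C ∈ part, B ≠ C → Disjoint B C) ∧
    (∀ S ∈ Δ.comps, ∃ B ∈ part, S ∈ B) ∧
    (∃ B ∈ part, ∃ S ∈ B, ∃ T ∈ B, S ≠ T) ∧
    Δ'.comps = MaximalMem {U : Set α | ∃ B ∈ part, U = ⋃₀ B}

/-- Membership in the search space `S_Δ`: a set of distributions merged from
`Δ` that are pairwise `≤_Σ`-incomparable. -/
def MemS (Δ : Distr α) (P : Set (Distr α)) : Prop :=
  (∀ Δ' ∈ P, MergedFrom Δ' Δ) ∧
  ∀ Δ₁ ∈ P, ∀ Δ₂ ∈ P, Δ₁ ≠ Δ₂ → ¬ DistLE Δ₁ Δ₂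

/-- The ordering `≤_Δ` on sets of distributions: every member of `Q` has a
member of `P` below it with respect to `≤_Σ`. -/
def SetLE (P Q : Set (Distr α)) : Prop :=
  ∀ Δ' ∈ Q, ∃ Δ'' ∈ P, DistLE Δ'' Δ'

/-- `[F]`: the `≤_Σ`-minimal members of a set of distributions. -/
def MinimalD (F : Set (Distr α)) : Set (Distr α) :=
  {Δ' | Δ' ∈ F ∧ ∀ Δ'' ∈ F, DistLE Δ'' Δ' → DistLE Δ' Δ''}

/-- `Δ'` is obtained from `Δ` by merging exactly two components `S ≠ T`
(and keeping only the maximal sub-alphabets); the members of `⊥(Δ)`. -/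
def MinMergedFrom (Δ' Δ : Distr α) : Prop :=
  ∃ S ∈ Δ.comps, ∃ T ∈ Δ.comps, S ≠ T ∧
    Δ'.comps = MaximalMem ((Δ.comps \ {S, T}) ∪ {S ∪ T})

/-- The set `A(Δ)` of shared symbols of a distribution. -/
def SharedSyms (Δ : Distr α) : Set α :=
  {a | ∃ S ∈ Δ.comps, ∃ T ∈ Δ.comps, S ≠ T ∧ a ∈ S ∧ a ∈ T}

/-- The substitution of `Δ'` into the component `C` of `Δ''` yields `Δs`:
`Δs` is obtained from the components of `Δ''` other than `C` together with the
intersections `C ∩ S` for components `S` of `Δ'`, keeping only the maximal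
non-empty members. -/
def SubstResult (Δ' Δ'' : Distr α) (C : Set α) (Δs : Distr α) : Prop :=
  Δs.comps =
    MaximalMem {T : Set α |
      T.Nonempty ∧ (T ∈ Δ''.comps \ {C} ∨ ∃ S ∈ Δ'.comps, T = C ∩ S)}

/-- One swap of two adjacent symbols forming a pair in `I`. -/
def SwapStep (I : Set (α × α)) (s t : List α) : Prop :=
  ∃ (u v : List α) (a b : α),
    (a, b) ∈ I ∧ s = u ++ a :: b :: v ∧ t = u ++ b :: a :: v

/-- Trace equivalence with respect to `I`: a finite sequence of swaps of
adjacent independent symbols. -/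
def TraceEquiv (I : Set (α × α)) : List α → List α → Prop :=
  Relation.ReflTransGen (SwapStep I)

/-- `L` is trace-closed with respect to `I`. -/
def TraceClosed (I : Set (α × α)) (L : Set (List α)) : Prop :=
  L = {t | ∃ s ∈ L, TraceEquiv I s t}

/-- The map `N` determined by the enumeration `c` of the components of a
distribution: `N(a) = {i : a ∉ Σ_i}`. -/
def Nmap {n : ℕ} (c : Fin n → Set α) (a : α) : Set (Fin n) :=
  {i | a ∉ c i}

/-- A simple path from `x` to `y` in the graph `(Σ, D)`: a list of pairwise
distinct symbols, starting at `x`, ending at `y`, with consecutive symbols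
related by `D`. -/
def IsSimplePath (D : Set (α × α)) (p : List α) (x y : α) : Prop :=
  p.Nodup ∧ p.head? = some x ∧ p.getLast? = some y ∧
    p.Chain' (fun a b => (a, b) ∈ D)

/-- `Cr_D(S, y)` (with `N` given by the enumeration `c`): the set of indices
`i` such that some simple path `p` from some `x ∈ S` to `y` in `(Σ, D)`
satisfies `i ∈ ⋂_{a ∈ p.dropLast} N(a)`. -/
def CrSet {n : ℕ} (c : Fin n → Set α) (D : Set (α × α)) (S : Set α) (y : α) :
    Set (Fin n) :=
  {i | ∃ x ∈ S, ∃ p : List α,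
    IsSimplePath D p x y ∧ ∀ a ∈ p.dropLast, i ∈ Nmap c a}

/-- The smallest set of distributions containing `Q` and closed under
substitution. -/
inductive SubstClosure (Q : Set (Distr α)) : Distr α → Prop
  | base (Δ' : Distr α) (h : Δ' ∈ Q) : SubstClosure Q Δ'
  | step (Δ' Δ'' Δs : Distr α) (C : Set α)
      (h1 : SubstClosure Q Δ') (h2 : SubstClosure Q Δ'')
      (hC : C ∈ Δ''.comps) (hA : SharedSyms Δ' ⊆ C)
      (hs : SubstResult Δ' Δ'' C Δs) : SubstClosure Q Δs

end Defs

section Count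

variable {α : Type} [Fintype α] [DecidableEq α]

/-- `L(Σ_j)` (with `j` 0-indexed, so the paper's exponent `j+1` is `j+2`
here): all strings containing exactly one occurrence of each `σ_i ∈ Σ_j` and
exactly `j+2` occurrences of each `σ_i ∉ Σ_j`. -/
def Lword {m : ℕ} (σ : Fin m → α) (Sj : Set α) (j : ℕ) : Set (List α) :=
  {s | ∀ i : Fin m,
    (σ i ∈ Sj → s.count (σ i) = 1) ∧ (σ i ∉ Sj → s.count (σ i) = j + 2)}

/-- The candidate counter example `L_cand = ⋃_j L(Σ_j)`, relative to an
enumeration `c` of the components and an enumeration `σ` of the alphabet. -/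
def Lcand {n m : ℕ} (c : Fin n → Set α) (σ : Fin m → α) : Set (List α) :=
  ⋃ j : Fin n, Lword σ (c j) (j : ℕ)

end Count

section Aux

variable {α : Type}

lemma projA_nil (S : Set α) : projA S [] = [] := rfl

lemma projA_cons_pos (S : Set α) {a : α} (h : a ∈ S) (s : List α) :
    projA S (a :: s) = a :: projA S s := by
  simp [projA, List.filter_cons, h]

lemma projA_cons_neg (S : Set α) {a : α} (h : a ∉ S) (s : List α) :
    projA S (a :: s) = projA S s := by
  simp [projA, List.filter_cons, h]

lemma mem_projA {S : Set α} {a : α} {s : List α} :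
    a ∈ projA S s ↔ a ∈ s ∧ a ∈ S := by
  simp [projA, List.mem_filter]

lemma projA_projA (S T : Set α) (s : List α) :
    projA S (projA T s) = projA (S ∩ T) s := by
  induction s with
  | nil => rfl
  | cons a s ih =>
    by_cases hT : a ∈ T <;> by_cases hS : a ∈ S
    · rw [projA_cons_pos T hT, projA_cons_pos S hS, projA_cons_pos (S ∩ T) (Set.mem_inter hS hT), ih]
    · rw [projA_cons_pos T hT, projA_cons_neg S hS, projA_cons_neg _ (by simp [hS]), ih]
    · rw [projA_cons_neg T hT, projA_cons_neg _ (by simp [hT]), ih]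
    · rw [projA_cons_neg T hT, projA_cons_neg _ (by simp [hT]), ih]

lemma projA_eq_self {S : Set α} {s : List α} (h : ∀ a ∈ s, a ∈ S) :
    projA S s = s := by
  induction s with
  | nil => rfl
  | cons a s ih =>
    rw [projA_cons_pos S (h a (by simp)), ih fun b hb => h b (by simp [hb])]

lemma key_lemma (n : ℕ) (S : Fin n → Set α) (S0 : Set α)
    (hS0 : ∀ a : α, (∃ i j, i ≠ j ∧ a ∈ S i ∧ a ∈ S j) → a ∈ S0) :
    ∀ N (t : List α) (w : Fin n → List α),
      t.length + ∑ i, (w i).length ≤ N →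
      (∀ a ∈ t, a ∈ S0) →
      (∀ i, ∀ a ∈ w i, a ∈ S i) →
      (∀ i, projA S0 (w i) = projA (S i) t) →
      ∃ s : List α, projA S0 s = t ∧ ∀ i, projA (S i) s = w i := by
  intro N
  induction N with
  | zero =>
    intro t w hb ht hw hproj
    have ht0 : t = [] := List.length_eq_zero_iff.mp (by omega)
    have hw0 : ∀ i, w i = [] := by
      intro i
      have h2 : (w i).length ≤ ∑ j, (w j).length :=
        Finset.single_le_sum (f := fun j => (w j).length)
          (fun j _ => Nat.zero_le _) (Finset.mem_univ i)
      have : (w i).length = 0 := by omega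
      exact List.length_eq_zero_iff.mp this
    exact ⟨[], by simp [projA_nil, ht0], fun i => by simp [projA_nil, hw0 i]⟩
  | succ N ih =>
    intro t w hb ht hw hproj
    classical
    by_cases hcase : ∃ i a l, w i = a :: l ∧ a ∉ S0
    · obtain ⟨i, a, l, hwi, haS0⟩ := hcase
      have haSi : a ∈ S i := hw i a (by rw [hwi]; simp)
      set w' : Fin n → List α := fun j => if j = i then l else w j with hw'
      have hsum : ∑ j, (w' j).length < ∑ j, (w j).length := by
        apply Finset.sum_lt_sum
        · intro j _
          by_cases hj : j = i
          · simp only [hw', if_pos hj, hj, hwi]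
            simp
          · simp [hw', hj]
        · exact ⟨i, Finset.mem_univ i, by simp [hw', hwi]⟩
      obtain ⟨s, hs1, hs2⟩ := ih t w' (by omega) ht
        (fun j b hbj => by
          by_cases hj : j = i
          · apply hw j b
            rw [hj, hwi]
            exact List.mem_cons_of_mem _ (by simpa [hw', hj] using hbj)
          · exact hw j b (by simpa [hw', hj] using hbj))
        (fun j => by
          by_cases hj : j = i
          · have h1 := hproj i
            rw [hwi, projA_cons_neg S0 haS0] at h1
            rw [hj]
            simpa [hw'] using h1
          · simpa [hw', hj] using hproj j)
      refine ⟨a :: s, by rw [projA_cons_neg S0 haS0]; exact hs1, fun j => ?_⟩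
      by_cases hj : j = i
      · rw [hj, projA_cons_pos (S i) haSi, hs2 i, hwi]
        simp [hw']
      · have haSj : a ∉ S j := fun h => haS0 (hS0 a ⟨j, i, hj, h, haSi⟩)
        rw [projA_cons_neg (S j) haSj, hs2 j]
        simp [hw', hj]
    · push_neg at hcase
      -- every nonempty w i starts with a symbol in S0
      match t with
      | [] =>
        refine ⟨[], rfl, fun i => ?_⟩
        have := hproj i
        rw [projA_nil] at this
        match hwi : w i with
        | [] => rfl
        | a :: l =>
          exfalso
          have haS0 : a ∈ S0 := hcase i a l hwi
          rw [hwi, projA_cons_pos S0 haS0] at this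
          simp at this
      | a :: t' =>
        have haS0 : a ∈ S0 := ht a (by simp)
        set w' : Fin n → List α := fun j => if a ∈ S j then (w j).tail else w j with hw'
        have hkey : ∀ j, a ∈ S j → w j = a :: (w j).tail := by
          intro j hj
          have h1 := hproj j
          rw [projA_cons_pos (S j) hj] at h1
          match hwj : w j with
          | [] => rw [hwj, projA_nil] at h1; simp at h1
          | b :: l =>
            have hbS0 : b ∈ S0 := hcase j b l hwj
            rw [hwj, projA_cons_pos S0 hbS0] at h1
            simp only [List.cons.injEq] at h1
            rw [h1.1]; rfl
        have hsum : ∀ j, (w' j).length ≤ (w j).length := by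
          intro j; by_cases hj : a ∈ S j <;> simp [hw', hj]
        obtain ⟨s, hs1, hs2⟩ := ih t' w'
          (by
            have : ∑ j, (w' j).length ≤ ∑ j, (w j).length :=
              Finset.sum_le_sum fun j _ => hsum j
            simp only [List.length_cons] at hb
            omega)
          (fun b hbt => ht b (by simp [hbt]))
          (fun j b hbj => by
            by_cases hj : a ∈ S j
            · exact hw j b (List.mem_of_mem_tail (by simpa [hw', hj] using hbj))
            · exact hw j b (by simpa [hw', hj] using hbj))
          (fun j => by
            by_cases hj : a ∈ S j
            · have h1 := hproj j
              rw [projA_cons_pos (S j) hj, hkey j hj, projA_cons_pos S0 haS0] at h1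
              simp only [List.cons.injEq] at h1
              simpa [hw', hj] using h1.2
            · have h1 := hproj j
              rw [projA_cons_neg (S j) hj] at h1
              simpa [hw', hj] using h1)
        refine ⟨a :: s, by rw [projA_cons_pos S0 haS0, hs1], fun j => ?_⟩
        by_cases hj : a ∈ S j
        · rw [projA_cons_pos (S j) hj, hs2 j, hkey j hj]
          simp [hw', hj]
        · rw [projA_cons_neg (S j) hj, hs2 j]
          simp [hw', hj]


end Aux

/-- If `⋃_{i ≠ j} (Σ_i ∩ Σ_j) ⊆ Σ_0`, then
`P_{Σ_0}(∥_i L_i) = ∥_i P_{Σ_0}(L_i)`, the product on the right being taken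
inside `Σ_0*` with the projections `P'_i : Σ_0* → (Σ_0 ∩ Σ_i)*`. -/
theorem statement_13 {α : Type} [Fintype α] (n : ℕ) (S : Fin n → Set α)
    (hcover : ∀ a : α, ∃ i, a ∈ S i)
    (L : Fin n → Set (List α)) (hL : ∀ i, ∀ s ∈ L i, ∀ a ∈ s, a ∈ S i)
    (S0 : Set α)
    (hS0 : ∀ a : α, (∃ i j, i ≠ j ∧ a ∈ S i ∧ a ∈ S j) → a ∈ S0) :
    projA S0 '' (⋂ i, projA (S i) ⁻¹' L i) =
      {s : List α | ∀ a ∈ s, a ∈ S0} ∩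
        ⋂ i, projA (S0 ∩ S i) ⁻¹' (projA S0 '' L i) := by
  ext t
  constructor
  · rintro ⟨s, hs, rfl⟩
    rw [Set.mem_iInter] at hs
    refine ⟨fun a ha => (mem_projA.mp ha).2, ?_⟩
    rw [Set.mem_iInter]
    intro i
    refine ⟨projA (S i) s, hs i, ?_⟩
    rw [projA_projA, projA_projA]
    congr 1
    ext a
    simp only [Set.mem_inter_iff]
    tauto
  · rintro ⟨ht0, hti⟩
    rw [Set.mem_iInter] at hti
    choose w hwL hwproj using hti
    have hproj : ∀ i, projA S0 (w i) = projA (S i) t := by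
      intro i
      rw [hwproj i]
      exact List.filter_congr fun a ha => by
        simp only [decide_eq_decide]
        exact ⟨fun h => h.2, fun h => ⟨ht0 a ha, h⟩⟩
    obtain ⟨s, hs1, hs2⟩ := key_lemma n S S0 hS0
      (t.length + ∑ i, (w i).length) t w le_rfl ht0
      (fun i => hL i (w i) (hwL i)) hproj
    exact ⟨s, Set.mem_iInter.mpr fun i => by rw [Set.mem_preimage, hs2 i]; exact hwL i, hs1⟩
end

section
/- Let Δ be a distribution of Σ of size at least 3. Then Δ has a reduction if and only if [⊥(Δ)] is a reduction of Δ. -/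
/-!
Decomposability is monotone along `≤_Σ`, and conversely `≤_Σ` is detected by decomposability:
a language depending only on the projection to a component `S` of `Δ₁` is `Δ₁`-decomposable,
and is `Δ₂`-decomposable only if `S` lies inside a component of `Δ₂`. Hence every member `Δ''`
of a reduction of `Δ` lies above `Δ`, and having fewer components it must put two components
`S ≠ T` of `Δ` into a single one of its own, so the merge of `S` and `T`, and below it a minimal
member of `⊥(Δ)`, lies below `Δ''`. As every member of `⊥(Δ)` lies above `Δ`, the set `[⊥(Δ)]`
characterises `Δ`-decomposability just as the reduction does, and it cannot consist of a single
distribution, since one with fewer components than `Δ` is never equivalent to `Δ`.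
-/

lemma projA_projA_of_subset {α : Type} {S T : Set α} (h : S ⊆ T) (u : List α) :
    projA S (projA T u) = projA S u := by
  unfold projA
  rw [List.filter_filter]
  refine List.filter_congr fun a _ => ?_
  by_cases ha : a ∈ S
  · simp [ha, h ha]
  · simp [ha]

section Reduction

variable {α : Type} [Fintype α]

instance : Finite (Distr α) :=
  Finite.of_injective Distr.comps fun Δ₁ Δ₂ h => by cases Δ₁; cases Δ₂; cases h; rfl

/-- `≤_Σ` as a preorder, so that the library's minimal elements of finite sets apply. -/
instance : Preorder (Distr α) where
  le := DistLE
  le_refl _ _ hS := ⟨_, hS, subset_rfl⟩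
  le_trans _ _ _ h₁ h₂ S hS :=
    let ⟨T, hT, hST⟩ := h₁ S hS
    let ⟨U, hU, hTU⟩ := h₂ T hT
    ⟨U, hU, hST.trans hTU⟩

lemma distLE_trans {Δ₁ Δ₂ Δ₃ : Distr α} (h₁ : DistLE Δ₁ Δ₂) (h₂ : DistLE Δ₂ Δ₃) :
    DistLE Δ₁ Δ₃ :=
  le_trans (α := Distr α) h₁ h₂

lemma comps_subset_of_distLE_of_distLE {Δ₁ Δ₂ : Distr α} (h₁ : DistLE Δ₁ Δ₂)
    (h₂ : DistLE Δ₂ Δ₁) : Δ₁.comps ⊆ Δ₂.comps := by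
  intro S hS
  obtain ⟨T, hT, hST⟩ := h₁ S hS
  obtain ⟨S', hS', hTS'⟩ := h₂ T hT
  have hSS' : S = S' := by
    by_contra hne
    exact Δ₁.comps_incomp S hS S' hS' hne (hST.trans hTS')
  rwa [hST.antisymm (hSS' ▸ hTS')]

lemma exists_minimalD_distLE {F : Set (Distr α)} {Δ : Distr α} (hΔ : Δ ∈ F) :
    ∃ Δ' ∈ MinimalD F, DistLE Δ' Δ := by
  obtain ⟨Δ', hle, hmin⟩ := (Set.toFinite F).isPWO.exists_le_minimal hΔ
  exact ⟨Δ', ⟨hmin.1, fun _ h => hmin.2 h⟩, hle⟩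

lemma subset_iInter_preimage_projA_image (L : Set (List α)) (Δ : Distr α) :
    L ⊆ ⋂ S ∈ Δ.comps, projA S ⁻¹' (projA S '' L) :=
  fun s hs => Set.mem_iInter₂.mpr fun _ _ => ⟨s, hs, rfl⟩

lemma Decomposable.mono {L : Set (List α)} {Δ₁ Δ₂ : Distr α} (hL : Decomposable L Δ₁)
    (h : DistLE Δ₁ Δ₂) : Decomposable L Δ₂ := by
  refine (subset_iInter_preimage_projA_image L Δ₂).antisymm fun s hs => ?_
  rw [hL]
  refine Set.mem_iInter₂.mpr fun S hS => ?_
  obtain ⟨T, hT, hST⟩ := h S hS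
  obtain ⟨l, hl, hls⟩ := Set.mem_iInter₂.mp hs T hT
  exact ⟨l, hl, by rw [← projA_projA_of_subset hST l, hls, projA_projA_of_subset hST]⟩

lemma decomposable_preimage_projA {Δ : Distr α} {S : Set α} (hS : S ∈ Δ.comps)
    (M : Set (List α)) : Decomposable (projA S ⁻¹' M) Δ := by
  refine (subset_iInter_preimage_projA_image _ Δ).antisymm fun s hs => ?_
  obtain ⟨l, hl, hls⟩ := Set.mem_iInter₂.mp hs S hS
  rwa [Set.mem_preimage, ← hls]

/-- Witness: if the component `S ∋ a` of `Δ₁` lies in no component of `Δ₂`, the language of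
strings with an even number of `S`-symbols is `Δ₁`- but not `Δ₂`-decomposable, since every
projection of `[a]` to a component `T` of `Δ₂` is also one of `[a, b]` or `[]`, `b ∈ S \ T`. -/
lemma distLE_of_forall_decomposable {Δ₁ Δ₂ : Distr α}
    (h : ∀ L : Set (List α), Decomposable L Δ₁ → Decomposable L Δ₂) : DistLE Δ₁ Δ₂ := by
  intro S hS
  by_contra! hS₂
  obtain ⟨a, ha⟩ := Δ₁.comps_nonempty S hS
  have hdec := h _ (decomposable_preimage_projA hS {u | Even u.length})
  have hmem :
      [a] ∈ ⋂ T ∈ Δ₂.comps, projA T ⁻¹' (projA T '' (projA S ⁻¹' {u | Even u.length})) := by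
    refine Set.mem_iInter₂.mpr fun T hT => ?_
    obtain ⟨b, hbS, hbT⟩ := Set.not_subset.mp (hS₂ T hT)
    by_cases haT : a ∈ T
    · exact ⟨[a, b], by simp [projA, ha, hbS], by simp [projA, haT, hbT]⟩
    · exact ⟨[], by simp [projA], by simp [projA, haT]⟩
  rw [← hdec] at hmem
  simp [projA, ha] at hmem

lemma exists_maximalMem_superset {F : Set (Set α)} {A : Set α} (hA : A ∈ F) :
    ∃ M ∈ MaximalMem F, A ⊆ M := by
  obtain ⟨M, hAM, hM⟩ := (Set.toFinite F).exists_le_maximal hA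
  exact ⟨M, ⟨hM.1, fun T hT hMT => hMT.antisymm (hM.2 hT hMT)⟩, hAM⟩

lemma distLE_of_comps_eq_maximalMem {Δ Δ' : Distr α} {F : Set (Set α)}
    (hΔ' : Δ'.comps = MaximalMem F) (hF : ∀ S ∈ Δ.comps, ∃ A ∈ F, S ⊆ A) : DistLE Δ Δ' := by
  intro S hS
  obtain ⟨A, hA, hSA⟩ := hF S hS
  obtain ⟨M, hM, hAM⟩ := exists_maximalMem_superset hA
  exact ⟨M, hΔ' ▸ hM, hSA.trans hAM⟩

def mergeFam (Δ : Distr α) (S T : Set α) : Set (Set α) :=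
  (Δ.comps \ {S, T}) ∪ {S ∪ T}

lemma exists_mem_mergeFam_superset (Δ : Distr α) (S T : Set α) :
    ∀ U ∈ Δ.comps, ∃ A ∈ mergeFam Δ S T, U ⊆ A := by
  intro U hU
  by_cases hUST : U = S ∨ U = T
  · refine ⟨S ∪ T, Or.inr rfl, ?_⟩
    rcases hUST with rfl | rfl
    exacts [Set.subset_union_left, Set.subset_union_right]
  · push Not at hUST
    exact ⟨U, Or.inl ⟨hU, by simp [hUST.1, hUST.2]⟩, subset_rfl⟩

lemma ncard_mergeFam_lt {Δ : Distr α} {S T : Set α} (hS : S ∈ Δ.comps) (hT : T ∈ Δ.comps)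
    (hST : S ≠ T) : (mergeFam Δ S T).ncard < Δ.comps.ncard := by
  have hpair : ({S, T} : Set (Set α)) ⊆ Δ.comps := Set.insert_subset hS (by simpa using hT)
  have hdiff := Set.ncard_sdiff hpair (Set.toFinite _)
  have hle : (mergeFam Δ S T).ncard ≤ (Δ.comps \ {S, T}).ncard + 1 := by
    rw [mergeFam, Set.union_singleton]
    exact Set.ncard_insert_le _ _
  have hcard := Set.ncard_le_ncard hpair (Set.toFinite _)
  rw [Set.ncard_pair hST] at hdiff hcard
  omega

noncomputable def mergePair (Δ : Distr α) (S T : Set α) (hS : S ∈ Δ.comps) : Distr α where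
  comps := MaximalMem (mergeFam Δ S T)
  comps_nonempty U hU := by
    rcases hU.1 with hU | rfl
    · exact Δ.comps_nonempty U hU.1
    · exact (Δ.comps_nonempty S hS).mono Set.subset_union_left
  comps_cover a := by
    obtain ⟨U, hU, haU⟩ := Δ.comps_cover a
    obtain ⟨A, hA, hUA⟩ := exists_mem_mergeFam_superset Δ S T U hU
    obtain ⟨M, hM, hAM⟩ := exists_maximalMem_superset hA
    exact ⟨M, hM, hAM (hUA haU)⟩
  comps_incomp U hU V hV hne hUV := hne (hU.2 V hV.1 hUV)

lemma minMergedFrom_mergePair {Δ : Distr α} {S T : Set α} (hS : S ∈ Δ.comps)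
    (hT : T ∈ Δ.comps) (hST : S ≠ T) : MinMergedFrom (mergePair Δ S T hS) Δ :=
  ⟨S, hS, T, hT, hST, rfl⟩

lemma MinMergedFrom.distLE {Δ Δ' : Distr α} (h : MinMergedFrom Δ' Δ) : DistLE Δ Δ' := by
  obtain ⟨S, -, T, -, -, hΔ'⟩ := h
  exact distLE_of_comps_eq_maximalMem hΔ' (exists_mem_mergeFam_superset Δ S T)

lemma MinMergedFrom.ncard_lt {Δ Δ' : Distr α} (h : MinMergedFrom Δ' Δ) :
    Δ'.comps.ncard < Δ.comps.ncard := by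
  obtain ⟨S, hS, T, hT, hST, hΔ'⟩ := h
  calc Δ'.comps.ncard ≤ (mergeFam Δ S T).ncard :=
        Set.ncard_le_ncard (hΔ' ▸ fun _ hU => hU.1) (Set.toFinite _)
    _ < Δ.comps.ncard := ncard_mergeFam_lt hS hT hST

/-- Pigeonhole: two components of `Δ` land in the same component of the smaller `Δ''`. -/
lemma exists_minMergedFrom_distLE {Δ Δ'' : Distr α} (hle : DistLE Δ Δ'')
    (hlt : Δ''.comps.ncard < Δ.comps.ncard) :
    ∃ Δ', MinMergedFrom Δ' Δ ∧ DistLE Δ' Δ'' := by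
  have hsel : ∀ S, ∃ U, S ∈ Δ.comps → U ∈ Δ''.comps ∧ S ⊆ U := by
    intro S
    by_cases hS : S ∈ Δ.comps
    · exact (hle S hS).imp fun _ hU _ => hU
    · exact ⟨∅, fun h => absurd h hS⟩
  choose f hf using hsel
  obtain ⟨S, hS, T, hT, hST, hfST⟩ :=
    Set.exists_ne_map_eq_of_ncard_lt_of_maps_to hlt (fun S hS => (hf S hS).1) (Set.toFinite _)
  refine ⟨mergePair Δ S T hS, minMergedFrom_mergePair hS hT hST, fun U hU => ?_⟩
  rcases hU.1 with hU | rfl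
  · exact hle U hU.1
  · exact ⟨f S, (hf S hS).1, Set.union_subset (hf S hS).2 (hfST ▸ (hf T hT).2)⟩

/-- If `P = {m}`, then `m` and `Δ` have the same decomposable languages, hence lie below each
other and have the same components. -/
lemma two_le_ncard_of_decomposable_iff {Δ : Distr α} {P : Set (Distr α)} (hP : P.Nonempty)
    (hsize : ∀ Δ' ∈ P, Δ'.comps.ncard < Δ.comps.ncard)
    (hiff : ∀ L : Set (List α), Decomposable L Δ ↔ ∀ Δ' ∈ P, Decomposable L Δ') :
    2 ≤ P.ncard := by
  by_contra! hlt
  obtain ⟨m, hm⟩ := hP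
  have hPm : ∀ Δ' ∈ P, Δ' = m := fun Δ' h =>
    (Set.ncard_le_one (Set.toFinite P)).mp (by omega) Δ' h m hm
  have hle : DistLE m Δ := distLE_of_forall_decomposable fun L hL =>
    (hiff L).2 fun Δ' h => hPm Δ' h ▸ hL
  have hge : DistLE Δ m := distLE_of_forall_decomposable fun L hL => (hiff L).1 hL m hm
  have := Set.ncard_le_ncard (comps_subset_of_distLE_of_distLE hge hle) (Set.toFinite _)
  exact absurd (hsize m hm) (by omega)

lemma IsReduction.of_setLE {Δ : Distr α} {P Q : Set (Distr α)} (hP : IsReduction P Δ)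
    (hQP : SetLE Q P) (hQ : ∀ Δ' ∈ Q, DistLE Δ Δ')
    (hsize : ∀ Δ' ∈ Q, Δ'.comps.ncard < Δ.comps.ncard) : IsReduction Q Δ := by
  obtain ⟨hP2, -, hPiff⟩ := hP
  have hiff : ∀ L : Set (List α), Decomposable L Δ ↔ ∀ Δ' ∈ Q, Decomposable L Δ' :=
    fun L => ⟨fun hL Δ' h => hL.mono (hQ Δ' h), fun hL => (hPiff L).2 fun Δ'' h'' =>
      let ⟨Δ', h', hle⟩ := hQP Δ'' h''
      (hL Δ' h').mono hle⟩
  obtain ⟨Δ'', h''⟩ := Set.nonempty_of_ncard_ne_zero (by omega : P.ncard ≠ 0)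
  obtain ⟨Δ', h', -⟩ := hQP Δ'' h''
  exact ⟨two_le_ncard_of_decomposable_iff ⟨Δ', h'⟩ hsize hiff, hsize, hiff⟩

lemma setLE_minimalD_minMergedFrom {Δ : Distr α} {P : Set (Distr α)} (hP : IsReduction P Δ) :
    SetLE (MinimalD {Δ' | MinMergedFrom Δ' Δ}) P := by
  obtain ⟨-, hsize, hiff⟩ := hP
  intro Δ'' h''
  have hle : DistLE Δ Δ'' := distLE_of_forall_decomposable fun L hL => (hiff L).1 hL Δ'' h''
  obtain ⟨Δ', hmerged, hle'⟩ := exists_minMergedFrom_distLE hle (hsize Δ'' h'')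
  obtain ⟨m, hm, hmle⟩ := exists_minimalD_distLE (F := {Δ' | MinMergedFrom Δ' Δ}) hmerged
  exact ⟨m, hm, distLE_trans hmle hle'⟩

end Reduction

theorem statement_19_general {α : Type} [Fintype α] (Δ : Distr α) :
    (∃ P : Set (Distr α), IsReduction P Δ) ↔
      IsReduction (MinimalD {Δ' : Distr α | MinMergedFrom Δ' Δ}) Δ :=
  ⟨fun ⟨_, hP⟩ => hP.of_setLE (setLE_minimalD_minMergedFrom hP) (fun _ h => h.1.distLE)
    (fun _ h => h.1.ncard_lt), fun h => ⟨_, h⟩⟩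

/-- A distribution `Δ` of size at least 3 has a reduction
iff `[⊥(Δ)]` is a reduction of `Δ`. -/
theorem statement_19 {α : Type} [Fintype α] (Δ : Distr α)
    (hn : 3 ≤ Δ.comps.ncard) :
    (∃ P : Set (Distr α), IsReduction P Δ) ↔
      IsReduction (MinimalD {Δ' : Distr α | MinMergedFrom Δ' Δ}) Δ :=
  statement_19_general Δ
end
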